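/- Let N ≥ 2 and let A, B be N×N complex matrices with Tr A = Tr B = 0. With K_2^{(N)}(X) := (N·Tr(X²) − (Tr X)²)/(N²−1), the variance of the additivity defect of K_2 over a random conjugacy orbit is ∫_{U(N)} ( K_2^{(N)}(A + U B U*) − K_2^{(N)}(A) − K_2^{(N)}(B) )² dU = 4 N² · Tr(A²) · Tr(B²) / (N²−1)³. -/

import Mathlib

open MeasureTheory Matrix

/-- The unitary group `U(N)` of `N × N` complex matrices. -/
abbrev UG (N : ℕ) : Type := Matrix.unitaryGroup (Fin N) ℂ

/-- We equip `U(N)` with its Borel σ-algebra. -/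
noncomputable instance (N : ℕ) : MeasurableSpace (UG N) := borel _

instance (N : ℕ) : BorelSpace (UG N) := ⟨rfl⟩

/-- Conjugation `U X U⋆` of a matrix `X` by a unitary matrix `U`. -/
noncomputable def conjU {N : ℕ} (U : UG N) (X : Matrix (Fin N) (Fin N) ℂ) :
    Matrix (Fin N) (Fin N) ℂ :=
  (U : Matrix (Fin N) (Fin N) ℂ) * X * star (U : Matrix (Fin N) (Fin N) ℂ)

/-- The degree-2 free cumulant precursor, by its explicit trace formula:
`K_2(X) = (N Tr(X²) - (Tr X)²) / (N² - 1)`. -/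
noncomputable def K2exp (N : ℕ) (X : Matrix (Fin N) (Fin N) ℂ) : ℂ :=
  ((N : ℂ) * (X ^ 2).trace - X.trace ^ 2) / ((N : ℂ) ^ 2 - 1)

/-!
Write `X = U B U⋆`. For traceless `A` and `B` the additivity defect of `K₂` is
`2N Tr(AX) / (N² - 1)`, so everything reduces to the second moments `E[Xᵢⱼ Xₖₗ]`. Left
invariance of the measure makes them invariant under conjugating `X` by any fixed unitary.
Diagonal phases kill every moment whose indices do not pair up, and permutations leave three
unknowns: `E[Xᵢᵢ Xₖₖ]`, `E[Xᵢₖ Xₖᵢ]` (`i ≠ k`) and `E[Xᵢᵢ²]`. A Householder reflection, which is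
not monomial, forces `E[Xᵢᵢ²] = E[Xᵢᵢ Xₖₖ] + E[Xᵢₖ Xₖᵢ]`, and the pointwise identities
`Tr X = 0` and `Tr X² = Tr B²` determine the other two. Hence
`E[Tr(AX)²] = Tr A² Tr B² / (N² - 1)`.
-/

namespace Matrix

variable {n : Type*} [Fintype n] [DecidableEq n]

theorem isCompact_unitaryGroup {𝕜 : Type*} [RCLike 𝕜] :
    IsCompact (unitaryGroup n 𝕜 : Set (Matrix n n 𝕜)) := by
  have hclosed : IsClosed {U : Matrix n n 𝕜 | star U * U = 1} :=
    isClosed_eq ((continuous_id.matrix_conjTranspose).matrix_mul continuous_id) continuous_const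
  refine (isCompact_univ_pi fun _ => isCompact_univ_pi fun _ =>
    isCompact_closedBall (0 : 𝕜) 1).of_isClosed_subset ?_ ?_
  · have hset : (unitaryGroup n 𝕜 : Set (Matrix n n 𝕜)) = {U | star U * U = 1} :=
      Set.ext fun U => mem_unitaryGroup_iff'
    exact hset ▸ hclosed
  · intro U hU
    simpa using fun i j => entry_norm_bound_of_unitary hU i j

instance {𝕜 : Type*} [RCLike 𝕜] : CompactSpace (unitaryGroup n 𝕜) :=
  isCompact_iff_compactSpace.mp isCompact_unitaryGroup

section StarRing

variable {R : Type*} [CommRing R] [StarRing R]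

theorem diagonal_mem_unitaryGroup {d : n → R} (hd : ∀ i, star (d i) * d i = 1) :
    diagonal d ∈ unitaryGroup n R := by
  rw [mem_unitaryGroup_iff', star_eq_conjTranspose, diagonal_conjTranspose, diagonal_mul_diagonal,
    ← diagonal_one]
  exact congrArg diagonal (funext hd)

theorem permMatrix_mem_unitaryGroup (σ : Equiv.Perm n) : σ.permMatrix R ∈ unitaryGroup n R := by
  rw [mem_unitaryGroup_iff', star_eq_conjTranspose, conjTranspose_permMatrix, ← permMatrix_mul,
    mul_inv_cancel, permMatrix_one]

theorem permMatrix_mul_mul_star (σ : Equiv.Perm n) (X : Matrix n n R) :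
    σ.permMatrix R * X * star (σ.permMatrix R) = X.submatrix σ σ := by
  rw [star_eq_conjTranspose, conjTranspose_permMatrix, PEquiv.toMatrix_toPEquiv_mul,
    PEquiv.mul_toMatrix_toPEquiv]
  rfl

def householder (v : n → R) : Matrix n n R := 1 - (2 : R) • vecMulVec v (star v)

theorem householder_mem_unitaryGroup {v : n → R} (hv : star v ⬝ᵥ v = 1) :
    householder v ∈ unitaryGroup n R := by
  have hstar : star (householder v) = householder v := by
    simp [householder, star_eq_conjTranspose, conjTranspose_vecMulVec]
  have hproj : vecMulVec v (star v) * vecMulVec v (star v) = vecMulVec v (star v) := by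
    rw [vecMulVec_mul_vecMulVec, hv, one_smul]
  rw [mem_unitaryGroup_iff', hstar, householder, sub_mul, mul_sub, mul_sub, Matrix.one_mul,
    Matrix.mul_one, Matrix.one_mul, smul_mul_smul_comm, hproj]
  module

end StarRing

/-- The reflection in `v = (3/5) eₐ + (4/5) e_b` has `a`-th row `(7/25) eₐ - (24/25) e_b`. -/
theorem exists_mem_unitaryGroup_sum_sq_row_ne_one {a b : n} (hab : a ≠ b) :
    ∃ V ∈ unitaryGroup n ℂ, ∑ i, (star (V a i) * V a i) ^ 2 ≠ 1 := by
  set v : n → ℂ := Pi.single a (3 / 5) + Pi.single b (4 / 5)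
  have hv : star v ⬝ᵥ v = 1 := by
    rw [dotProduct, Fintype.sum_eq_add a b hab]
    · simp [v, hab, hab.symm]; norm_num
    · intro i hi; simp [v, hi.1, hi.2]
  refine ⟨householder v, householder_mem_unitaryGroup hv, ?_⟩
  rw [Fintype.sum_eq_add a b hab]
  · simp [householder, v, hab, vecMulVec_apply]; norm_num
  · intro i hi; simp [householder, v, vecMulVec_apply, Ne.symm hi.1, hi.1, hi.2]

end Matrix

theorem Equiv.Perm.exists_apply_eq_and_apply_eq {α : Type*} [DecidableEq α] {a b i k : α}
    (hab : a ≠ b) (hik : i ≠ k) : ∃ σ : Equiv.Perm α, σ a = i ∧ σ b = k := by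
  set b' := Equiv.swap a i b
  have hb' : b' ≠ i := by
    rw [Ne, Equiv.swap_apply_eq_iff, Equiv.swap_apply_right]
    exact hab.symm
  refine ⟨(Equiv.swap a i).trans (Equiv.swap b' k), ?_, ?_⟩
  · simp [Equiv.swap_apply_of_ne_of_ne hb'.symm hik]
  · simp [b']

section PairingTensor

variable {n R : Type*} [Fintype n] [DecidableEq n] [CommSemiring R] (α β δ : R)

def pairingTensor (i j k l : n) : R :=
  (if i = j ∧ k = l then α else 0) + (if i = l ∧ j = k then β else 0) +
    (if i = j ∧ j = k ∧ k = l then δ else 0)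

theorem sum_mul_mul_pairingTensor (C D : Matrix n n R) :
    ∑ i, ∑ j, ∑ k, ∑ l, C i j * D k l * pairingTensor α β δ j i l k =
      α * C.trace * D.trace + β * (C * D).trace + δ * ∑ i, C i i * D i i := by
  simp only [pairingTensor, mul_add, Finset.sum_add_distrib, mul_ite, mul_zero, ite_and]
  simp [trace, mul_apply, Finset.mul_sum, mul_comm, mul_left_comm]

theorem sum_pairingTensor_swap :
    ∑ j : n, ∑ k, pairingTensor α β δ j k k j =
      Fintype.card n * α + Fintype.card n ^ 2 * β + Fintype.card n * δ := by
  simp [pairingTensor, Finset.sum_add_distrib, eq_comm]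
  ring

end PairingTensor

variable {N : ℕ}

theorem conjU_conjU (U V : UG N) (X : Matrix (Fin N) (Fin N) ℂ) :
    conjU V (conjU U X) = conjU (V * U) X := by
  simp only [conjU, UnitaryGroup.mul_val, star_mul, Matrix.mul_assoc]

theorem trace_conjU (U : UG N) (X : Matrix (Fin N) (Fin N) ℂ) : (conjU U X).trace = X.trace := by
  rw [conjU, trace_mul_cycle, UnitaryGroup.star_mul_self, Matrix.one_mul]

theorem conjU_mul (U : UG N) (X Y : Matrix (Fin N) (Fin N) ℂ) :
    conjU U (X * Y) = conjU U X * conjU U Y := by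
  simp only [conjU, Matrix.mul_assoc, ← Matrix.mul_assoc (star (U : Matrix (Fin N) (Fin N) ℂ)),
    UnitaryGroup.star_mul_self, Matrix.one_mul]

@[fun_prop]
theorem continuous_conjU_apply (X : Matrix (Fin N) (Fin N) ℂ) (i j : Fin N) :
    Continuous fun U : UG N => conjU U X i j :=
  ((continuous_subtype_val.matrix_mul continuous_const).matrix_mul
    continuous_subtype_val.matrix_conjTranspose).matrix_elem i j

variable (μ : Measure (UG N)) (B : Matrix (Fin N) (Fin N) ℂ)

noncomputable def conjMoment (i j k l : Fin N) : ℂ :=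
  ∫ U, conjU U B i j * conjU U B k l ∂μ

section Invariance

variable [μ.IsMulLeftInvariant]

theorem integral_comp_conjU_conjU {E : Type*} [NormedAddCommGroup E] [NormedSpace ℝ E]
    (F : Matrix (Fin N) (Fin N) ℂ → E) (V : UG N) :
    ∫ U, F (conjU V (conjU U B)) ∂μ = ∫ U, F (conjU U B) ∂μ := by
  simp only [conjU_conjU]
  exact integral_mul_left_eq_self (fun U => F (conjU U B)) V

theorem conjMoment_perm (σ : Equiv.Perm (Fin N)) (i j k l : Fin N) :
    conjMoment μ B (σ i) (σ j) (σ k) (σ l) = conjMoment μ B i j k l := by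
  rw [conjMoment, conjMoment,
    ← integral_comp_conjU_conjU μ B (fun X => X i j * X k l) ⟨_, permMatrix_mem_unitaryGroup σ⟩]
  simp only [conjU, permMatrix_mul_mul_star, submatrix_apply]

theorem conjMoment_diagonal {d : Fin N → ℂ} (hd : ∀ i, star (d i) * d i = 1) (i j k l : Fin N) :
    d i * star (d j) * (d k * star (d l)) * conjMoment μ B i j k l = conjMoment μ B i j k l := by
  rw [conjMoment, ← integral_const_mul,
    ← integral_comp_conjU_conjU μ B (fun X => X i j * X k l) ⟨_, diagonal_mem_unitaryGroup hd⟩]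
  congr 1 with U
  simp only [conjU, star_eq_conjTranspose, diagonal_conjTranspose, diagonal_mul, mul_diagonal,
    Pi.star_apply]
  ring

theorem conjMoment_eq_zero {i j k l : Fin N} (h : ¬((i = j ∧ k = l) ∨ (i = l ∧ j = k))) :
    conjMoment μ B i j k l = 0 := by
  let d (m : Fin N) : Fin N → ℂ := Function.update 1 m Complex.I
  have hd (m t : Fin N) : star (d m t) * d m t = 1 := by
    by_cases ht : t = m <;> simp [d, ht, Complex.conj_I]
  -- The phase `I` placed at index `i` or at index `k` multiplies the moment by a power `I ^ e`
  -- with `e ≢ 0 [MOD 4]` unless the indices pair up.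
  by_contra hT
  have hi := (mul_eq_right₀ hT).mp (conjMoment_diagonal μ B (hd i) i j k l)
  have hk := (mul_eq_right₀ hT).mp (conjMoment_diagonal μ B (hd k) i j k l)
  simp only [d, Function.update_apply, Pi.one_apply] at hi hk
  split_ifs at hi hk <;> subst_vars <;>
    simp_all [Complex.ext_iff, neg_eq_iff_add_eq_zero, one_add_one_eq_two]

theorem conjMoment_eq_pairingTensor {a b : Fin N} (hab : a ≠ b) :
    conjMoment μ B = pairingTensor (conjMoment μ B a a b b) (conjMoment μ B a b b a)
      (conjMoment μ B a a a a - conjMoment μ B a a b b - conjMoment μ B a b b a) := by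
  ext i j k l
  by_cases hpair₁ : i = j ∧ k = l
  · obtain ⟨rfl, rfl⟩ := hpair₁
    by_cases hik : i = k
    · subst hik
      simpa [pairingTensor] using conjMoment_perm μ B (Equiv.swap a i) a a a a
    · obtain ⟨σ, rfl, rfl⟩ := Equiv.Perm.exists_apply_eq_and_apply_eq hab hik
      simp [pairingTensor, hik, conjMoment_perm]
  by_cases hpair₂ : i = l ∧ j = k
  · obtain ⟨rfl, rfl⟩ := hpair₂
    have hij : i ≠ j := fun h => hpair₁ ⟨h, h.symm⟩
    obtain ⟨σ, rfl, rfl⟩ := Equiv.Perm.exists_apply_eq_and_apply_eq hab hij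
    simp [pairingTensor, hij, conjMoment_perm]
  · rw [conjMoment_eq_zero μ B (not_or.mpr ⟨hpair₁, hpair₂⟩)]
    have hpair₃ : ¬(i = j ∧ j = k ∧ k = l) := fun h => hpair₁ ⟨h.1, h.2.2⟩
    rw [pairingTensor, if_neg hpair₁, if_neg hpair₂, if_neg hpair₃, add_zero, add_zero]

theorem integral_trace_mul_trace_mul_conj (C D : Matrix (Fin N) (Fin N) ℂ) (V : UG N) :
    ∫ U, (star (V : Matrix (Fin N) (Fin N) ℂ) * C * V * conjU U B).trace *
        (star (V : Matrix (Fin N) (Fin N) ℂ) * D * V * conjU U B).trace ∂μ =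
      ∫ U, (C * conjU U B).trace * (D * conjU U B).trace ∂μ := by
  rw [← integral_comp_conjU_conjU μ B (fun X => (C * X).trace * (D * X).trace) V]
  have hcycle (M X : Matrix (Fin N) (Fin N) ℂ) :
      (M * conjU V X).trace = (star (V : Matrix (Fin N) (Fin N) ℂ) * M * V * X).trace := by
    rw [conjU, ← Matrix.mul_assoc, ← Matrix.mul_assoc, trace_mul_comm, ← Matrix.mul_assoc,
      ← Matrix.mul_assoc]
  simp only [hcycle]

end Invariance

variable [IsProbabilityMeasure μ]

theorem integrable_of_continuous {f : UG N → ℂ} (hf : Continuous f) : Integrable f μ :=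
  hf.integrable_of_hasCompactSupport (HasCompactSupport.of_compactSpace f)

theorem integral_trace_mul_trace_mul (C D : Matrix (Fin N) (Fin N) ℂ) :
    ∫ U, (C * conjU U B).trace * (D * conjU U B).trace ∂μ =
      ∑ i, ∑ j, ∑ k, ∑ l, C i j * D k l * conjMoment μ B j i l k := by
  have hexpand (U : UG N) : (C * conjU U B).trace * (D * conjU U B).trace =
      ∑ i, ∑ j, ∑ k, ∑ l, C i j * D k l * (conjU U B j i * conjU U B l k) := by
    simp only [trace, diag, mul_apply, Finset.sum_mul_sum]
    exact Finset.sum_congr rfl fun i _ => Finset.sum_comm.trans <| Finset.sum_congr rfl fun j _ =>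
      Finset.sum_congr rfl fun k _ => Finset.sum_congr rfl fun l _ => by ring
  simp_rw [hexpand]
  simp (disch := exact fun _ _ => integrable_of_continuous μ (by fun_prop)) only
    [integral_finsetSum, integral_const_mul, conjMoment]

theorem sum_conjMoment_eq_trace_sq : ∑ j, ∑ k, conjMoment μ B j k k j = (B ^ 2).trace := by
  have htrace (U : UG N) : ∑ j, ∑ k, conjU U B j k * conjU U B k j = (B ^ 2).trace := by
    rw [sq, ← trace_conjU U, conjU_mul]
    simp [trace, mul_apply]
  simp_rw [conjMoment]
  simp (disch := exact fun _ _ => integrable_of_continuous μ (by fun_prop)) only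
    [← integral_finsetSum, htrace, integral_const, probReal_univ, one_smul]

variable {α β δ : ℂ}

theorem integral_trace_mul_trace_mul_of_eq_pairingTensor
    (hT : conjMoment μ B = pairingTensor α β δ) (C D : Matrix (Fin N) (Fin N) ℂ) :
    ∫ U, (C * conjU U B).trace * (D * conjU U B).trace ∂μ =
      α * C.trace * D.trace + β * (C * D).trace + δ * ∑ i, C i i * D i i := by
  rw [integral_trace_mul_trace_mul, hT, sum_mul_mul_pairingTensor]

theorem conjMoment_coeffs_of_trace_eq_zero (hT : conjMoment μ B = pairingTensor α β δ)
    (hB : B.trace = 0) :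
    N * (N * α + β + δ) = 0 := by
  have h := integral_trace_mul_trace_mul_of_eq_pairingTensor μ B hT 1 1
  simp only [Matrix.one_mul, trace_conjU, hB, mul_zero, integral_zero, trace_one, Fintype.card_fin,
    one_apply_eq, Finset.sum_const, Finset.card_univ] at h
  linear_combination -h

theorem conjMoment_coeffs_of_trace_sq (hT : conjMoment μ B = pairingTensor α β δ) :
    N * (α + N * β + δ) = (B ^ 2).trace := by
  have h := sum_conjMoment_eq_trace_sq μ B
  rw [hT, sum_pairingTensor_swap, Fintype.card_fin] at h
  linear_combination h

variable [μ.IsMulLeftInvariant]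

theorem conjMoment_diag_coeff_eq_zero (hT : conjMoment μ B = pairingTensor α β δ) {a b : Fin N}
    (hab : a ≠ b) : δ = 0 := by
  obtain ⟨V, hV, hrow⟩ := exists_mem_unitaryGroup_sum_sq_row_ne_one hab
  set E : Matrix (Fin N) (Fin N) ℂ := single a a 1
  have hEE : E * E = E := by rw [single_mul_single_same, mul_one]
  have hEtrace : E.trace = 1 := trace_single_eq_same a 1
  have hEdiag : ∑ i, E i i * E i i = 1 := by simp [E, single_apply]
  -- Conjugating `E` by `V` preserves its trace and idempotency but turns `∑ Eᵢᵢ²` into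
  -- `∑ |Vₐᵢ|⁴ ≠ 1`.
  have hC : (star V * E * V) * (star V * E * V) = star V * E * V := by
    rw [Matrix.mul_assoc, ← Matrix.mul_assoc V, ← Matrix.mul_assoc V, mem_unitaryGroup_iff.mp hV,
      Matrix.one_mul, ← Matrix.mul_assoc, Matrix.mul_assoc (star V) E E, hEE]
  have hCtrace : (star V * E * V).trace = 1 := by
    rw [trace_mul_cycle, mem_unitaryGroup_iff.mp hV, Matrix.one_mul, trace_single_eq_same]
  have hCdiag (i : Fin N) : (star V * E * V) i i = star (V a i) * V a i := by
    simp [E, mul_apply, single_apply, ite_and]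
  have h := integral_trace_mul_trace_mul_conj μ B E E ⟨V, hV⟩
  rw [integral_trace_mul_trace_mul_of_eq_pairingTensor μ B hT,
    integral_trace_mul_trace_mul_of_eq_pairingTensor μ B hT] at h
  rw [hEE, hEtrace, hEdiag, hC, hCtrace] at h
  simp only [hCdiag, ← sq] at h
  have hδ : δ * (∑ i, (star (V a i) * V a i) ^ 2 - 1) = 0 := by linear_combination h
  exact (mul_eq_zero.mp hδ).resolve_right (sub_ne_zero.mpr hrow)

theorem integral_trace_mul_conjU_sq (hN : 2 ≤ N) {A : Matrix (Fin N) (Fin N) ℂ}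
    (hA : A.trace = 0) (hB : B.trace = 0) :
    ∫ U, (A * conjU U B).trace ^ 2 ∂μ = (A ^ 2).trace * (B ^ 2).trace / ((N : ℂ) ^ 2 - 1) := by
  have hab : (⟨0, by omega⟩ : Fin N) ≠ ⟨1, by omega⟩ := by simp
  have hT := conjMoment_eq_pairingTensor μ B hab
  have h₁ := conjMoment_coeffs_of_trace_eq_zero μ B hT hB
  have h₂ := conjMoment_coeffs_of_trace_sq μ B hT
  have hδ := conjMoment_diag_coeff_eq_zero μ B hT hab
  set β := conjMoment μ B ⟨0, _⟩ ⟨1, _⟩ ⟨1, _⟩ ⟨0, _⟩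
  have hN₀ : (N : ℂ) ≠ 0 := by exact_mod_cast (by omega : N ≠ 0)
  have hden : (N : ℂ) ^ 2 - 1 ≠ 0 := sub_ne_zero.mpr (by exact_mod_cast (by nlinarith : N ^ 2 ≠ 1))
  have hβ : β * ((N : ℂ) ^ 2 - 1) = (B ^ 2).trace := by
    refine mul_left_cancel₀ hN₀ ?_
    linear_combination N * h₂ - h₁ - (N ^ 2 - N) * hδ
  simp only [sq (trace _)]
  rw [integral_trace_mul_trace_mul_of_eq_pairingTensor μ B hT, hA, hδ, eq_div_iff hden, sq A]
  linear_combination (A * A).trace * hβ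

theorem K2exp_add_sub_sub (A C : Matrix (Fin N) (Fin N) ℂ) :
    K2exp N (A + C) - K2exp N A - K2exp N C =
      2 * (N * (A * C).trace - A.trace * C.trace) / ((N : ℂ) ^ 2 - 1) := by
  simp only [K2exp, sq, add_mul, mul_add, trace_add, trace_mul_comm C A]
  ring

theorem K2exp_conjU (U : UG N) (X : Matrix (Fin N) (Fin N) ℂ) :
    K2exp N (conjU U X) = K2exp N X := by
  rw [K2exp, K2exp, sq (conjU U X), ← conjU_mul, trace_conjU, trace_conjU, ← sq]

/-- Variance of the additivity defect of `K_2` for traceless `A, B`: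
`∫_{U(N)} (K_2(A + U B U⋆) - K_2(A) - K_2(B))² dU = 4 N² Tr(A²) Tr(B²) / (N²-1)³`. -/
theorem statement13 (N : ℕ) (hN : 2 ≤ N) (haarU : Measure (UG N))
    [IsProbabilityMeasure haarU] [Measure.IsMulLeftInvariant haarU]
    (A B : Matrix (Fin N) (Fin N) ℂ) (hA : A.trace = 0) (hB : B.trace = 0) :
    (∫ U, (K2exp N (A + conjU U B) - K2exp N A - K2exp N B) ^ 2 ∂haarU) =
      4 * (N : ℂ) ^ 2 * (A ^ 2).trace * (B ^ 2).trace / ((N : ℂ) ^ 2 - 1) ^ 3 := by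
  have hdefect (U : UG N) : K2exp N (A + conjU U B) - K2exp N A - K2exp N B =
      2 * N / ((N : ℂ) ^ 2 - 1) * (A * conjU U B).trace := by
    rw [← K2exp_conjU U B, K2exp_add_sub_sub, trace_conjU, hA]
    ring
  simp_rw [hdefect, mul_pow]
  rw [integral_const_mul, integral_trace_mul_conjU_sq haarU B hN hA hB]
  simp only [div_eq_mul_inv, ← inv_pow]
  ring
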